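/- arXiv:2210.12664 — 2 statements merged into one kernel-verified Lean document; each statement's English description precedes it below -/
import Mathlib

section
/- Let A be a hyperbolic linear automorphism of ℝ^d and let F : ℝ^d → ℝ^d be a surjective map. If H₁, H₂ : ℝ^d → ℝ^d satisfy H₁ ∘ F = A ∘ H₁ and H₂ ∘ F = A ∘ H₂, and both H₁ and H₂ are at bounded distance from the identity (i.e. sup_{x ∈ ℝ^d} ‖Hᵢ(x) − x‖ < ∞ for i = 1,2), then H₁ = H₂. -/
/-- A linear automorphism `A` of `ℝ^d` is hyperbolic if there are `A`-invariant
subspaces `Es` and `Eu` with `Es ⊕ Eu = ℝ^d`, and constants `C > 0`, `λ ∈ (0,1)`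
such that `A` contracts on `Es` and `A⁻¹` contracts on `Eu` at rate `λ`. -/
def IsHyperbolicLinear {d : ℕ}
    (A : EuclideanSpace ℝ (Fin d) ≃ₗ[ℝ] EuclideanSpace ℝ (Fin d)) : Prop :=
  ∃ (Es Eu : Submodule ℝ (EuclideanSpace ℝ (Fin d))) (C lam : ℝ),
    0 < C ∧ 0 < lam ∧ lam < 1 ∧
    Es.map A.toLinearMap = Es ∧
    Eu.map A.toLinearMap = Eu ∧
    IsCompl Es Eu ∧
    (∀ v ∈ Es, ∀ n : ℕ, ‖(A ^ n) v‖ ≤ C * lam ^ n * ‖v‖) ∧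
    (∀ v ∈ Eu, ∀ n : ℕ, ‖(A.symm ^ n) v‖ ≤ C * lam ^ n * ‖v‖)

/-!
Proof idea: the difference `g = H₁ - H₂` is bounded and satisfies `g ∘ F = A ∘ g`, so by
surjectivity of `F` every value `g x` has an `A`-orbit that is bounded both forwards and
backwards. For a hyperbolic `A` only `0` has such an orbit: a bounded forward orbit forces the
unstable component to vanish (since `A⁻¹` contracts it back), and symmetrically a bounded
backward orbit kills the stable component.
-/

open Filter Topology

lemma Function.Semiconj.sub {α G : Type*} [AddGroup G] {H₁ H₂ : α → G} {F : α → α}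
    {A : G →+ G} (h₁ : Function.Semiconj H₁ F A) (h₂ : Function.Semiconj H₂ F A) :
    Function.Semiconj (H₁ - H₂) F A := fun x => by
  simp only [Pi.sub_apply, h₁ x, h₂ x, map_sub]

lemma eq_zero_of_norm_le_mul_pow {E : Type*} [NormedAddCommGroup E] {v : E}
    {K lam : ℝ} (hlam₀ : 0 ≤ lam) (hlam₁ : lam < 1)
    (h : ∀ n : ℕ, ‖v‖ ≤ K * lam ^ n) : v = 0 := by
  have hlim : Tendsto (fun n : ℕ => K * lam ^ n) atTop (𝓝 0) := by
    simpa using (tendsto_pow_atTop_nhds_zero_of_lt_one hlam₀ hlam₁).const_mul K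
  exact norm_le_zero_iff.mp (ge_of_tendsto hlim (Eventually.of_forall h))

namespace LinearEquiv

lemma symm_pow_apply_pow_apply {R M : Type*} [Semiring R] [AddCommMonoid M] [Module R M]
    (A : M ≃ₗ[R] M) (n : ℕ) (v : M) : (A.symm ^ n) ((A ^ n) v) = v := by
  rw [show A.symm ^ n = (A ^ n).symm from inv_pow A n, symm_apply_apply]

variable {E : Type*} [NormedAddCommGroup E] [NormedSpace ℝ E]

lemma unstable_part_eq_zero_of_bounded_forward_orbit (A : E ≃ₗ[ℝ] E) {Es Eu : Submodule ℝ E}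
    {C lam B : ℝ} (hC : 0 ≤ C) (hlam₀ : 0 ≤ lam) (hlam₁ : lam < 1)
    (hEu : Set.MapsTo A Eu Eu)
    (hS : ∀ v ∈ Es, ∀ n : ℕ, ‖(A ^ n) v‖ ≤ C * lam ^ n * ‖v‖)
    (hU : ∀ v ∈ Eu, ∀ n : ℕ, ‖(A.symm ^ n) v‖ ≤ C * lam ^ n * ‖v‖)
    {ws wu : E} (hws : ws ∈ Es) (hwu : wu ∈ Eu)
    (hB : ∀ n : ℕ, ‖(A ^ n) (ws + wu)‖ ≤ B) :
    wu = 0 := by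
  refine eq_zero_of_norm_le_mul_pow (K := C * (B + C * ‖ws‖)) hlam₀ hlam₁ fun n => ?_
  have hmem : (A ^ n) wu ∈ Eu := by
    rw [coe_pow]
    exact hEu.iterate n hwu
  have hforward : ‖(A ^ n) wu‖ ≤ B + C * ‖ws‖ :=
    calc ‖(A ^ n) wu‖ = ‖(A ^ n) (ws + wu) - (A ^ n) ws‖ := by
          rw [map_add, add_sub_cancel_left]
      _ ≤ B + C * lam ^ n * ‖ws‖ := (norm_sub_le _ _).trans (add_le_add (hB n) (hS ws hws n))
      _ ≤ B + C * ‖ws‖ := by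
        gcongr
        exact mul_le_of_le_one_right hC (pow_le_one₀ hlam₀ hlam₁.le)
  calc ‖wu‖ = ‖(A.symm ^ n) ((A ^ n) wu)‖ := by rw [symm_pow_apply_pow_apply]
    _ ≤ C * lam ^ n * ‖(A ^ n) wu‖ := hU _ hmem n
    _ ≤ C * lam ^ n * (B + C * ‖ws‖) := by gcongr
    _ = C * (B + C * ‖ws‖) * lam ^ n := by ring

end LinearEquiv

lemma IsHyperbolicLinear.eq_zero_of_bounded_orbit {d : ℕ}
    {A : EuclideanSpace ℝ (Fin d) ≃ₗ[ℝ] EuclideanSpace ℝ (Fin d)}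
    (hA : IsHyperbolicLinear A)
    {w : EuclideanSpace ℝ (Fin d)} {B : ℝ} (hfwd : ∀ n : ℕ, ‖(A ^ n) w‖ ≤ B)
    (hbwd : ∀ n : ℕ, ‖(A.symm ^ n) w‖ ≤ B) : w = 0 := by
  obtain ⟨Es, Eu, C, lam, hC, hlam₀, hlam₁, hEs, hEu, hcompl, hS, hU⟩ := hA
  have hw : w ∈ Es ⊔ Eu := hcompl.sup_eq_top ▸ Submodule.mem_top
  obtain ⟨ws, hws, wu, hwu, rfl⟩ := Submodule.mem_sup.mp hw
  have hEuA : Set.MapsTo A Eu Eu := fun v hv => hEu ▸ Submodule.mem_map_of_mem hv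
  have hEsA : Set.MapsTo A.symm Es Es := fun v hv => by
    rw [← hEs, Submodule.map_equiv_eq_comap_symm] at hv
    exact hv
  have hwu0 : wu = 0 := A.unstable_part_eq_zero_of_bounded_forward_orbit hC.le hlam₀.le hlam₁
    hEuA hS hU hws hwu hfwd
  -- `A⁻¹` is hyperbolic with the roles of `Es` and `Eu` exchanged.
  have hws0 : ws = 0 := A.symm.unstable_part_eq_zero_of_bounded_forward_orbit hC.le hlam₀.le
    hlam₁ hEsA hU hS hwu hws (fun n => add_comm ws wu ▸ hbwd n)
  rw [hws0, hwu0, add_zero]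

/-- Uniqueness of the semi-conjugacy: if `H₁ ∘ F = A ∘ H₁` and `H₂ ∘ F = A ∘ H₂`
with `F` surjective and both `H₁`, `H₂` at bounded distance from the identity,
then `H₁ = H₂`. -/
theorem semiconjugacy_unique {d : ℕ}
    (A : EuclideanSpace ℝ (Fin d) ≃ₗ[ℝ] EuclideanSpace ℝ (Fin d))
    (hA : IsHyperbolicLinear A)
    (F : EuclideanSpace ℝ (Fin d) → EuclideanSpace ℝ (Fin d))
    (hF : Function.Surjective F)
    (H₁ H₂ : EuclideanSpace ℝ (Fin d) → EuclideanSpace ℝ (Fin d))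
    (hH₁ : ∀ x, H₁ (F x) = A (H₁ x))
    (hH₂ : ∀ x, H₂ (F x) = A (H₂ x))
    (hb₁ : ∃ M : ℝ, ∀ x, ‖H₁ x - x‖ ≤ M)
    (hb₂ : ∃ M : ℝ, ∀ x, ‖H₂ x - x‖ ≤ M) :
    H₁ = H₂ := by
  obtain ⟨M₁, hM₁⟩ := hb₁
  obtain ⟨M₂, hM₂⟩ := hb₂
  have hbdd : ∀ y, ‖(H₁ - H₂) y‖ ≤ M₁ + M₂ := fun y =>
    calc ‖(H₁ - H₂) y‖ = ‖(H₁ y - y) - (H₂ y - y)‖ := by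
          rw [Pi.sub_apply, sub_sub_sub_cancel_right]
      _ ≤ M₁ + M₂ := (norm_sub_le _ _).trans (add_le_add (hM₁ y) (hM₂ y))
  have hsemiconj : ∀ n, Function.Semiconj (H₁ - H₂) F^[n] ⇑(A ^ n) := fun n => by
    rw [LinearEquiv.coe_pow]
    exact (Function.Semiconj.sub (A := A.toAddMonoidHom) hH₁ hH₂).iterate_right n
  funext x
  rw [← sub_eq_zero, ← Pi.sub_apply]
  refine hA.eq_zero_of_bounded_orbit (B := M₁ + M₂) (fun n => ?_) (fun n => ?_)
  · rw [← hsemiconj n x]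
    exact hbdd _
  · obtain ⟨y, rfl⟩ := hF.iterate n x
    rw [hsemiconj n y, LinearEquiv.symm_pow_apply_pow_apply]
    exact hbdd y
end

section
/- Let A be a hyperbolic linear automorphism of ℝ^d. Let F, G, H : ℝ^d → ℝ^d be homeomorphisms with H ∘ F = G ∘ H and sup_{x ∈ ℝ^d} ‖H(x) − x‖ < ∞. Suppose H_f : ℝ^d → ℝ^d satisfies H_f ∘ F = A ∘ H_f with sup_{x ∈ ℝ^d} ‖H_f(x) − x‖ < ∞, and H_g : ℝ^d → ℝ^d satisfies H_g ∘ G = A ∘ H_g with sup_{x ∈ ℝ^d} ‖H_g(x) − x‖ < ∞. Then H_g = H_f ∘ H^{-1}. -/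
private lemma symm_pow_apply_pow_apply {d : ℕ}
    (A : EuclideanSpace ℝ (Fin d) ≃ₗ[ℝ] EuclideanSpace ℝ (Fin d)) (n : ℕ)
    (w : EuclideanSpace ℝ (Fin d)) : (A.symm ^ n) ((A ^ n) w) = w := by
  rw [LinearEquiv.pow_apply, LinearEquiv.pow_apply]
  exact (Function.LeftInverse.iterate A.symm_apply_apply n) w

private lemma pow_apply_symm_pow_apply {d : ℕ}
    (A : EuclideanSpace ℝ (Fin d) ≃ₗ[ℝ] EuclideanSpace ℝ (Fin d)) (n : ℕ)
    (w : EuclideanSpace ℝ (Fin d)) : (A ^ n) ((A.symm ^ n) w) = w := by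
  rw [LinearEquiv.pow_apply, LinearEquiv.pow_apply]
  exact (Function.LeftInverse.iterate A.apply_symm_apply n) w

/-- Key rigidity lemma: a vector whose full `A`-orbit (forward and backward)
is bounded must be zero, when `A` is hyperbolic. -/
private lemma bounded_orbit_eq_zero {d : ℕ}
    (A : EuclideanSpace ℝ (Fin d) ≃ₗ[ℝ] EuclideanSpace ℝ (Fin d))
    (hA : IsHyperbolicLinear A) (v : EuclideanSpace ℝ (Fin d)) (M : ℝ)
    (h1 : ∀ n : ℕ, ‖(A ^ n) v‖ ≤ M) (h2 : ∀ n : ℕ, ‖(A.symm ^ n) v‖ ≤ M) :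
    v = 0 := by
  obtain ⟨Es, Eu, C, lam, hC, hl0, hl1, hAEs, hAEu, hcompl, hs, hu⟩ := hA
  -- continuous projections
  set ps : EuclideanSpace ℝ (Fin d) →ₗ[ℝ] EuclideanSpace ℝ (Fin d) :=
    Es.subtype.comp (Es.projectionOnto Eu hcompl) with hps
  set pu : EuclideanSpace ℝ (Fin d) →ₗ[ℝ] EuclideanSpace ℝ (Fin d) :=
    Eu.subtype.comp (Eu.projectionOnto Es hcompl.symm) with hpu
  have hdecomp : ∀ w, ps w + pu w = w := fun w =>
    Submodule.projection_add_projection_eq_self hcompl w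
  have hpsmem : ∀ w, ps w ∈ Es := fun w => (Es.projectionOnto Eu hcompl w).2
  have hpumem : ∀ w, pu w ∈ Eu := fun w => (Eu.projectionOnto Es hcompl.symm w).2
  have hps_left : ∀ w ∈ Es, ps w = w := fun w hw => by
    exact Submodule.projection_apply_of_mem_left hcompl hw
  have hps_right : ∀ w ∈ Eu, ps w = 0 := fun w hw => by
    exact Submodule.projection_apply_of_mem_right hcompl hw
  have hpu_left : ∀ w ∈ Eu, pu w = w := fun w hw => by
    exact Submodule.projection_apply_of_mem_left hcompl.symm hw
  have hpu_right : ∀ w ∈ Es, pu w = 0 := fun w hw => by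
    exact Submodule.projection_apply_of_mem_right hcompl.symm hw
  -- invariance of subspaces under A, A.symm, and powers
  have hAs : ∀ w ∈ Es, A w ∈ Es := fun w hw => by
    rw [← hAEs]; exact ⟨w, hw, rfl⟩
  have hAu : ∀ w ∈ Eu, A w ∈ Eu := fun w hw => by
    rw [← hAEu]; exact ⟨w, hw, rfl⟩
  have hAs' : ∀ w ∈ Es, A.symm w ∈ Es := fun w hw => by
    obtain ⟨u, hu', he⟩ : w ∈ Es.map A.toLinearMap := by rw [hAEs]; exact hw
    have : A.symm w = u := by rw [← he]; exact A.symm_apply_apply u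
    rwa [this]
  have hAu' : ∀ w ∈ Eu, A.symm w ∈ Eu := fun w hw => by
    obtain ⟨u, hu', he⟩ : w ∈ Eu.map A.toLinearMap := by rw [hAEu]; exact hw
    have : A.symm w = u := by rw [← he]; exact A.symm_apply_apply u
    rwa [this]
  have hApows : ∀ n : ℕ, ∀ w ∈ Es, (A ^ n) w ∈ Es := by
    intro n; induction n with
    | zero => intro w hw; simpa using hw
    | succ n ih =>
      intro w hw
      rw [pow_succ']
      have : (A * A ^ n) w = A ((A ^ n) w) := rfl
      rw [this]; exact hAs _ (ih w hw)
  have hApowu : ∀ n : ℕ, ∀ w ∈ Eu, (A ^ n) w ∈ Eu := by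
    intro n; induction n with
    | zero => intro w hw; simpa using hw
    | succ n ih =>
      intro w hw
      rw [pow_succ']
      have : (A * A ^ n) w = A ((A ^ n) w) := rfl
      rw [this]; exact hAu _ (ih w hw)
  have hASpows : ∀ n : ℕ, ∀ w ∈ Es, (A.symm ^ n) w ∈ Es := by
    intro n; induction n with
    | zero => intro w hw; simpa using hw
    | succ n ih =>
      intro w hw
      rw [pow_succ']
      have : (A.symm * A.symm ^ n) w = A.symm ((A.symm ^ n) w) := rfl
      rw [this]; exact hAs' _ (ih w hw)
  -- decomposition of v
  set vs := ps v with hvs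
  set vu := pu v with hvu
  -- projection of (A^n) v
  have key_u : ∀ n : ℕ, pu ((A ^ n) v) = (A ^ n) vu := by
    intro n
    have h1' : (A ^ n) v = (A ^ n) vs + (A ^ n) vu := by
      rw [← map_add]; rw [hvs, hvu, hdecomp]
    rw [h1', map_add, hpu_right _ (hApows n vs (hpsmem v)),
      hpu_left _ (hApowu n vu (hpumem v)), zero_add]
  have key_s : ∀ n : ℕ, ps ((A.symm ^ n) v) = (A.symm ^ n) vs := by
    intro n
    have hvunmem : (A.symm ^ n) vu ∈ Eu := by
      induction n with
      | zero => simpa using hpumem v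
      | succ n ih =>
        rw [pow_succ']
        have : (A.symm * A.symm ^ n) vu = A.symm ((A.symm ^ n) vu) := rfl
        rw [this]; exact hAu' _ ih
    have h1' : (A.symm ^ n) v = (A.symm ^ n) vs + (A.symm ^ n) vu := by
      rw [← map_add]; rw [hvs, hvu, hdecomp]
    rw [h1', map_add, hps_left _ (hASpows n vs (hpsmem v)), hps_right _ hvunmem, add_zero]
  -- norm bounds on projections
  have Mnonneg : 0 ≤ M := le_trans (norm_nonneg _) (by simpa using h1 0)
  set Ps := LinearMap.toContinuousLinearMap ps with hPs
  set Pu := LinearMap.toContinuousLinearMap pu with hPu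
  set M' : ℝ := max (‖Ps‖ * M) (‖Pu‖ * M) with hM'
  have hub : ∀ n : ℕ, ‖(A ^ n) vu‖ ≤ M' := by
    intro n
    rw [← key_u n]
    calc ‖pu ((A ^ n) v)‖ = ‖Pu ((A ^ n) v)‖ := rfl
      _ ≤ ‖Pu‖ * ‖(A ^ n) v‖ := Pu.le_opNorm _
      _ ≤ ‖Pu‖ * M := mul_le_mul_of_nonneg_left (h1 n) (norm_nonneg _)
      _ ≤ M' := le_max_right _ _
  have hsb : ∀ n : ℕ, ‖(A.symm ^ n) vs‖ ≤ M' := by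
    intro n
    rw [← key_s n]
    calc ‖ps ((A.symm ^ n) v)‖ = ‖Ps ((A.symm ^ n) v)‖ := rfl
      _ ≤ ‖Ps‖ * ‖(A.symm ^ n) v‖ := Ps.le_opNorm _
      _ ≤ ‖Ps‖ * M := mul_le_mul_of_nonneg_left (h2 n) (norm_nonneg _)
      _ ≤ M' := le_max_left _ _
  have hM'0 : 0 ≤ M' := le_trans (norm_nonneg _) (hub 0)
  -- vu = 0
  have hvu0 : vu = 0 := by
    have hbd : ∀ n : ℕ, ‖vu‖ ≤ C * lam ^ n * M' := by
      intro n
      have := hu ((A ^ n) vu) (hApowu n vu (hpumem v)) n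
      rw [symm_pow_apply_pow_apply] at this
      calc ‖vu‖ ≤ C * lam ^ n * ‖(A ^ n) vu‖ := this
        _ ≤ C * lam ^ n * M' := by
            apply mul_le_mul_of_nonneg_left (hub n)
            positivity
    have htend : Filter.Tendsto (fun n : ℕ => C * lam ^ n * M') Filter.atTop (nhds 0) := by
      have : Filter.Tendsto (fun n : ℕ => lam ^ n) Filter.atTop (nhds 0) :=
        tendsto_pow_atTop_nhds_zero_of_lt_one hl0.le hl1
      have h2' := (this.const_mul C).mul_const M'
      simpa using h2'
    have : ‖vu‖ ≤ 0 := le_of_tendsto_of_tendsto' tendsto_const_nhds htend hbd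
    exact norm_le_zero_iff.mp this
  -- vs = 0
  have hvs0 : vs = 0 := by
    have hbd : ∀ n : ℕ, ‖vs‖ ≤ C * lam ^ n * M' := by
      intro n
      have := hs ((A.symm ^ n) vs) (hASpows n vs (hpsmem v)) n
      rw [pow_apply_symm_pow_apply] at this
      calc ‖vs‖ ≤ C * lam ^ n * ‖(A.symm ^ n) vs‖ := this
        _ ≤ C * lam ^ n * M' := by
            apply mul_le_mul_of_nonneg_left (hsb n)
            positivity
    have htend : Filter.Tendsto (fun n : ℕ => C * lam ^ n * M') Filter.atTop (nhds 0) := by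
      have : Filter.Tendsto (fun n : ℕ => lam ^ n) Filter.atTop (nhds 0) :=
        tendsto_pow_atTop_nhds_zero_of_lt_one hl0.le hl1
      have h2' := (this.const_mul C).mul_const M'
      simpa using h2'
    have : ‖vs‖ ≤ 0 := le_of_tendsto_of_tendsto' tendsto_const_nhds htend hbd
    exact norm_le_zero_iff.mp this
  have := hdecomp v
  rw [← hvs, ← hvu, hvs0, hvu0] at this
  simpa using this.symm

/-- Uniqueness of a semi-conjugacy with `A` at bounded distance from identity. -/
private lemma semiconj_unique {d : ℕ}
    (A : EuclideanSpace ℝ (Fin d) ≃ₗ[ℝ] EuclideanSpace ℝ (Fin d))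
    (hA : IsHyperbolicLinear A)
    (G : EuclideanSpace ℝ (Fin d) ≃ₜ EuclideanSpace ℝ (Fin d))
    (K1 K2 : EuclideanSpace ℝ (Fin d) → EuclideanSpace ℝ (Fin d))
    (hK1 : ∀ x, K1 (G x) = A (K1 x))
    (hK1b : ∃ M : ℝ, ∀ x, ‖K1 x - x‖ ≤ M)
    (hK2 : ∀ x, K2 (G x) = A (K2 x))
    (hK2b : ∃ M : ℝ, ∀ x, ‖K2 x - x‖ ≤ M) :
    K1 = K2 := by
  obtain ⟨M1, hM1⟩ := hK1b
  obtain ⟨M2, hM2⟩ := hK2b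
  funext x
  -- forward iterates
  have fwd : ∀ (K : EuclideanSpace ℝ (Fin d) → EuclideanSpace ℝ (Fin d)),
      (∀ y, K (G y) = A (K y)) → ∀ n : ℕ, (A ^ n) (K x) = K ((⇑G)^[n] x) := by
    intro K hK n
    induction n with
    | zero => simp
    | succ n ih =>
      rw [Function.iterate_succ_apply']
      rw [show (K ((G ((⇑G)^[n] x)))) = A (K ((⇑G)^[n] x)) from hK _]
      rw [pow_succ']
      have : (A * A ^ n) (K x) = A ((A ^ n) (K x)) := rfl
      rw [this, ih]
  -- backward: A.symm (K y) = K (G.symm y)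
  have bstep : ∀ (K : EuclideanSpace ℝ (Fin d) → EuclideanSpace ℝ (Fin d)),
      (∀ y, K (G y) = A (K y)) → ∀ y, A.symm (K y) = K (G.symm y) := by
    intro K hK y
    have := hK (G.symm y)
    rw [G.apply_symm_apply] at this
    rw [this, A.symm_apply_apply]
  have bwd : ∀ (K : EuclideanSpace ℝ (Fin d) → EuclideanSpace ℝ (Fin d)),
      (∀ y, K (G y) = A (K y)) → ∀ n : ℕ, (A.symm ^ n) (K x) = K ((⇑G.symm)^[n] x) := by
    intro K hK n
    induction n with
    | zero => simp
    | succ n ih =>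
      rw [Function.iterate_succ_apply']
      rw [pow_succ']
      have : (A.symm * A.symm ^ n) (K x) = A.symm ((A.symm ^ n) (K x)) := rfl
      rw [this, ih, bstep K hK]
  set v := K1 x - K2 x with hv
  have hbound : ∀ y, ‖K1 y - K2 y‖ ≤ M1 + M2 := by
    intro y
    calc ‖K1 y - K2 y‖ = ‖(K1 y - y) - (K2 y - y)‖ := by congr 1; abel
      _ ≤ ‖K1 y - y‖ + ‖K2 y - y‖ := norm_sub_le _ _
      _ ≤ M1 + M2 := add_le_add (hM1 y) (hM2 y)
  have h1 : ∀ n : ℕ, ‖(A ^ n) v‖ ≤ M1 + M2 := by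
    intro n
    rw [hv, map_sub, fwd K1 hK1 n, fwd K2 hK2 n]
    exact hbound _
  have h2 : ∀ n : ℕ, ‖(A.symm ^ n) v‖ ≤ M1 + M2 := by
    intro n
    rw [hv, map_sub, bwd K1 hK1 n, bwd K2 hK2 n]
    exact hbound _
  have := bounded_orbit_eq_zero A hA v (M1 + M2) h1 h2
  rw [hv] at this
  exact sub_eq_zero.mp this

/-- If `H` conjugates `F` to `G` and is at bounded distance from the identity,
and `H_f`, `H_g` are the semi-conjugacies of `F`, `G` with the hyperbolic
automorphism `A` at bounded distance from the identity, then `H_g = H_f ∘ H⁻¹`. -/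
theorem semiconjugacy_comp_inverse {d : ℕ}
    (A : EuclideanSpace ℝ (Fin d) ≃ₗ[ℝ] EuclideanSpace ℝ (Fin d))
    (hA : IsHyperbolicLinear A)
    (F G H : EuclideanSpace ℝ (Fin d) ≃ₜ EuclideanSpace ℝ (Fin d))
    (hconj : ∀ x, H (F x) = G (H x))
    (hHb : ∃ M : ℝ, ∀ x, ‖H x - x‖ ≤ M)
    (Hf Hg : EuclideanSpace ℝ (Fin d) → EuclideanSpace ℝ (Fin d))
    (hHf : ∀ x, Hf (F x) = A (Hf x))
    (hHfb : ∃ M : ℝ, ∀ x, ‖Hf x - x‖ ≤ M)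
    (hHg : ∀ x, Hg (G x) = A (Hg x))
    (hHgb : ∃ M : ℝ, ∀ x, ‖Hg x - x‖ ≤ M) :
    Hg = Hf ∘ H.symm := by
  obtain ⟨MH, hMH⟩ := hHb
  obtain ⟨Mf, hMf⟩ := hHfb
  -- K2 = Hf ∘ H.symm is a semiconjugacy of G with A
  have hK2conj : ∀ x, (Hf ∘ H.symm) (G x) = A ((Hf ∘ H.symm) x) := by
    intro x
    have h1 : F (H.symm x) = H.symm (G x) := by
      have := hconj (H.symm x)
      rw [H.apply_symm_apply] at this
      calc F (H.symm x) = H.symm (H (F (H.symm x))) := (H.symm_apply_apply _).symm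
        _ = H.symm (G x) := by rw [this]
    simp only [Function.comp_apply]
    rw [← h1, hHf]
  have hK2b : ∃ M : ℝ, ∀ x, ‖(Hf ∘ H.symm) x - x‖ ≤ M := by
    refine ⟨Mf + MH, fun x => ?_⟩
    have h1 : ‖H.symm x - x‖ ≤ MH := by
      have := hMH (H.symm x)
      rw [H.apply_symm_apply] at this
      calc ‖H.symm x - x‖ = ‖x - H.symm x‖ := (norm_sub_rev _ _)
        _ ≤ MH := this
    calc ‖(Hf ∘ H.symm) x - x‖
        = ‖(Hf (H.symm x) - H.symm x) + (H.symm x - x)‖ := by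
          simp only [Function.comp_apply]; congr 1; abel
      _ ≤ ‖Hf (H.symm x) - H.symm x‖ + ‖H.symm x - x‖ := norm_add_le _ _
      _ ≤ Mf + MH := add_le_add (hMf _) h1
  exact semiconj_unique A hA G Hg (Hf ∘ H.symm) hHg hHgb hK2conj hK2b
end
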